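/- arXiv:2004.11277 — 2 statements merged into one kernel-verified Lean document; each statement's English description precedes it below -/
import Mathlib

section
/- Let n ∈ ℕ, let Δ_i > 0 and k_i > 0 for i = 1,…,n, and let c ≥ 0. Let e : [0,∞) → ℝⁿ be continuous with |e_i(0)| < Δ_i for every i. Suppose that for every t ≥ 0, if |e_i(s)| < Δ_i holds for all s ∈ [0,t] and all i, then Σᵢ (k_i/2)·ln(Δ_i²/(Δ_i² − e_i(t)²)) ≤ c. Then for every t ≥ 0 and every i, e_i(t)² ≤ Δ_i²·(1 − exp(−2c/k_i)); in particular |e_i(t)| < Δ_i for all t ≥ 0 and all i. -/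
/-!
Let `B i = Δ i ^ 2 * (1 - exp (-2 c / k i)) < Δ i ^ 2`. While the trajectory stays in the open
box `|e i| < Δ i`, every barrier term is nonnegative, so each single term is at most `c`, which
unwinds to `e i ^ 2 ≤ B i`: the trajectory is confined to a closed set strictly inside the box.
A continuous path cannot then leave the box: at the first exit time it would, by continuity, still
lie in that closed set, hence in the box.
-/

open Set

theorem ContinuousOn.mapsTo_Ici_of_trapped {X : Type*} [TopologicalSpace X] {γ : ℝ → X}
    {U K : Set X} {a : ℝ} (hγ : ContinuousOn γ (Ici a)) (hU : IsOpen U) (hK : IsClosed K)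
    (hKU : K ⊆ U) (ha : γ a ∈ U) (htrap : ∀ t, a ≤ t → MapsTo γ (Icc a t) U → γ t ∈ K) :
    MapsTo γ (Ici a) K := by
  suffices hstay : MapsTo γ (Ici a) U from
    fun t ht => htrap t ht fun s hs => hstay hs.1
  by_contra hexit
  set E := Ici a ∩ γ ⁻¹' Uᶜ
  have hE : E.Nonempty := by
    obtain ⟨t, ht, htU⟩ := not_forall₂.1 hexit
    exact ⟨t, ht, htU⟩
  have hEbdd : BddBelow E := ⟨a, fun t ht => ht.1⟩
  -- `T` is the first exit time from `U`.
  set T := sInf E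
  have hTE : T ∈ E := (hγ.preimage_isClosed_of_isClosed isClosed_Ici hU.isClosed_compl).csInf_mem
    hE hEbdd
  have haT : a < T := lt_of_le_of_ne hTE.1 fun h => hTE.2 (h ▸ ha)
  have hbefore : MapsTo γ (Ico a T) K := fun s hs =>
    htrap s hs.1 fun u hu => by
      by_contra hu'
      exact notMem_of_lt_csInf (hu.2.trans_lt hs.2) hEbdd ⟨hu.1, hu'⟩
  have hclosure : closure (Ico a T) = Icc a T := closure_Ico haT.ne
  have hT : γ T ∈ K := by
    refine closure_minimal hbefore.image_subset hK
      ((hγ.mono (hclosure ▸ Icc_subset_Ici_self)).image_closure ?_)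
    exact hclosure ▸ mem_image_of_mem γ (right_mem_Icc.2 haT.le)
  exact hTE.2 (hKU hT)

noncomputable def logBarrier (k Δ x : ℝ) : ℝ :=
  k / 2 * Real.log (Δ ^ 2 / (Δ ^ 2 - x ^ 2))

section logBarrier

variable {k Δ x : ℝ}

theorem logBarrier_nonneg (hk : 0 < k) (hx : |x| < Δ) : 0 ≤ logBarrier k Δ x := by
  have hgap : 0 < Δ ^ 2 - x ^ 2 := sub_pos.2 (sq_lt_sq' (neg_lt_of_abs_lt hx) (lt_of_abs_lt hx))
  have hratio : 1 ≤ Δ ^ 2 / (Δ ^ 2 - x ^ 2) := by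
    rw [le_div_iff₀ hgap]
    nlinarith [sq_nonneg x]
  exact mul_nonneg (by positivity) (Real.log_nonneg hratio)

theorem sq_le_of_logBarrier_le {c : ℝ} (hk : 0 < k) (hx : |x| < Δ) (h : logBarrier k Δ x ≤ c) :
    x ^ 2 ≤ Δ ^ 2 * (1 - Real.exp (-2 * c / k)) := by
  have hgap : 0 < Δ ^ 2 - x ^ 2 := sub_pos.2 (sq_lt_sq' (neg_lt_of_abs_lt hx) (lt_of_abs_lt hx))
  have hΔ : 0 < Δ ^ 2 := by linarith [sq_nonneg x]
  have hlog : -2 * c / k ≤ Real.log ((Δ ^ 2 - x ^ 2) / Δ ^ 2) := by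
    rw [← inv_div (Δ ^ 2), Real.log_inv, neg_mul, neg_div, neg_le_neg_iff, le_div_iff₀ hk]
    unfold logBarrier at h
    linarith
  have hexp := (Real.le_log_iff_exp_le (div_pos hgap hΔ)).1 hlog
  rw [le_div_iff₀ hΔ] at hexp
  linarith

end logBarrier

theorem abs_lt_of_sq_le_mul_one_sub_exp {x Δ a : ℝ} (hΔ : 0 < Δ)
    (h : x ^ 2 ≤ Δ ^ 2 * (1 - Real.exp a)) : |x| < Δ := by
  have hsq : x ^ 2 < Δ ^ 2 := by nlinarith [mul_pos (pow_pos hΔ 2) (Real.exp_pos a)]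
  exact abs_lt_of_sq_lt_sq hsq hΔ.le

theorem barrier_invariance_general (n : ℕ) (Δ k : Fin n → ℝ)
    (hΔ : ∀ i, 0 < Δ i) (hk : ∀ i, 0 < k i)
    (c : ℝ) (e : ℝ → Fin n → ℝ) (hcont : ContinuousOn e (Set.Ici 0))
    (h0 : ∀ i, |e 0 i| < Δ i)
    (hbar : ∀ t, 0 ≤ t → (∀ s ∈ Set.Icc 0 t, ∀ i, |e s i| < Δ i) →
      ∑ i, (k i / 2) * Real.log ((Δ i) ^ 2 / ((Δ i) ^ 2 - (e t i) ^ 2)) ≤ c) :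
    ∀ t, 0 ≤ t → ∀ i,
      (e t i) ^ 2 ≤ (Δ i) ^ 2 * (1 - Real.exp (-2 * c / k i)) ∧ |e t i| < Δ i := by
  set U : Set (Fin n → ℝ) := {x | ∀ i, |x i| < Δ i}
  set K : Set (Fin n → ℝ) := {x | ∀ i, x i ^ 2 ≤ Δ i ^ 2 * (1 - Real.exp (-2 * c / k i))}
  have hU : IsOpen U := by
    simp only [U, Set.ofPred_forall]
    exact isOpen_iInter_of_finite fun i => isOpen_lt (by fun_prop) continuous_const
  have hK : IsClosed K := by
    simp only [K, Set.ofPred_forall]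
    exact isClosed_iInter fun i => isClosed_le (by fun_prop) continuous_const
  have hKU : K ⊆ U := fun x hx i => abs_lt_of_sq_le_mul_one_sub_exp (hΔ i) (hx i)
  have htrap : ∀ t, 0 ≤ t → MapsTo e (Icc 0 t) U → e t ∈ K := by
    intro t ht hinside i
    have hnow : e t ∈ U := hinside ⟨ht, le_rfl⟩
    refine sq_le_of_logBarrier_le (hk i) (hnow i) (le_trans ?_ (hbar t ht hinside))
    exact Finset.single_le_sum (f := fun j => logBarrier (k j) (Δ j) (e t j))
      (fun j _ => logBarrier_nonneg (hk j) (hnow j)) (Finset.mem_univ i)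
  have hinvariant : MapsTo e (Ici 0) K := hcont.mapsTo_Ici_of_trapped hU hK hKU h0 htrap
  intro t ht i
  exact ⟨hinvariant ht i, hKU (hinvariant ht) i⟩

/-- Invariance argument: if the logarithmic barrier sum stays below `c` as long as the
trajectory stays inside the constraint region, and the trajectory starts strictly inside,
then every component satisfies `e_i(t)² ≤ Δ_i²·(1 − exp(−2c/k_i))`, and in particular
`|e_i(t)| < Δ_i` for all `t ≥ 0`. -/
theorem barrier_invariance (n : ℕ) (Δ k : Fin n → ℝ)
    (hΔ : ∀ i, 0 < Δ i) (hk : ∀ i, 0 < k i)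
    (c : ℝ) (hc : 0 ≤ c) (e : ℝ → Fin n → ℝ) (hcont : ContinuousOn e (Set.Ici 0))
    (h0 : ∀ i, |e 0 i| < Δ i)
    (hbar : ∀ t, 0 ≤ t → (∀ s ∈ Set.Icc 0 t, ∀ i, |e s i| < Δ i) →
      ∑ i, (k i / 2) * Real.log ((Δ i) ^ 2 / ((Δ i) ^ 2 - (e t i) ^ 2)) ≤ c) :
    ∀ t, 0 ≤ t → ∀ i,
      (e t i) ^ 2 ≤ (Δ i) ^ 2 * (1 - Real.exp (-2 * c / k i)) ∧ |e t i| < Δ i :=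
  barrier_invariance_general n Δ k hΔ hk c e hcont h0 hbar
end

section
/- Fix n, p ∈ ℕ, constants Δ_i > 0 and k_i > 0 (i = 1,…,n), a constant k_n > 0, positive definite diagonal n×n matrices K_r = diag{κ_i} and α = diag{α_i}, and a positive definite diagonal p×p matrix Γ. Let e, r : ℝ → ℝⁿ and θ̃ : ℝ → ℝᵖ be differentiable at t, let M : ℝ → ℝ^{n×n} be differentiable at t with M(t) symmetric, let C(t), Y_d(t) be real matrices of sizes n×n and n×p, let χ(t) ∈ ℝⁿ, and let ρ₁, ρ₂ ≥ 0 be real numbers. Define K_e = diag{k_i/(Δ_i² − e_i(t)²)}. Assume: (i) |e_i(t)| < Δ_i for all i; (ii) M(t)·r'(t) = −C(t)·r(t) − K_r·r(t) − K_e·e(t) + χ(t) − (k_n ρ₁² + ρ₂)·r(t) + Y_d(t)·θ̃(t); (iii) r(t)ᵀ(M'(t) − 2C(t))r(t) = 0; (iv) ‖χ(t)‖ ≤ ρ₁‖e(t)‖ + ρ₂‖r(t)‖; (v) e'(t) = −α·e(t) + r(t); (vi) θ̃'(t) = −Γ·Y_d(t)ᵀ·r(t). Then the function V_l(s) = ½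 r(s)ᵀM(s)r(s) + Σᵢ (k_i/2)·ln(Δ_i²/(Δ_i² − e_i(s)²)) + ½ θ̃(s)ᵀΓ⁻¹θ̃(s) is differentiable at t and satisfies V_l'(t) ≤ −(minᵢ κ_i)·‖r(t)‖² − (minᵢ k_iα_i/(Δ_i² − e_i(t)²) − 1/(4k_n))·‖e(t)‖². -/
/-- The Euclidean norm of a vector in `ℝⁿ`. -/
noncomputable def eucNorm {n : ℕ} (v : Fin n → ℝ) : ℝ := Real.sqrt (∑ i, v i ^ 2)

/-!
Differentiating `V_l` along the trajectory gives `½ rᵀṀr + rᵀM ṙ` from the kinetic term,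
`Σ k_i e_i ė_i / (Δ_i² − e_i²) = rᵀK_e e − Σ k_iα_i e_i² / (Δ_i² − e_i²)` from the barrier, and
`θ̃ᵀΓ⁻¹θ̃' = −rᵀY_d θ̃` from the adaptive law. Inserting the closed loop for `M ṙ`, skew-symmetry
removes the Coriolis term, and the terms `rᵀK_e e` and `rᵀY_d θ̃` cancel, leaving
`−rᵀK_r r + rᵀχ − (k_n ρ₁² + ρ₂)‖r‖² − Σ k_iα_i e_i² / (Δ_i² − e_i²)`. The mismatch is absorbed by
`rᵀχ ≤ ρ₁‖r‖‖e‖ + ρ₂‖r‖²` and Young's inequality `ρ₁‖r‖‖e‖ ≤ k_n ρ₁²‖r‖² + ‖e‖²/(4k_n)`.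
-/

open Matrix

lemma eucNorm_eq_norm_toLp {n : ℕ} (v : Fin n → ℝ) : eucNorm v = ‖WithLp.toLp 2 v‖ := by
  simp [eucNorm, EuclideanSpace.norm_eq]

lemma dotProduct_self_eq_eucNorm_sq {n : ℕ} (v : Fin n → ℝ) : v ⬝ᵥ v = eucNorm v ^ 2 := by
  rw [eucNorm, Real.sq_sqrt (by positivity)]
  simp [dotProduct, sq]

lemma dotProduct_le_eucNorm_mul_eucNorm {n : ℕ} (v w : Fin n → ℝ) :
    v ⬝ᵥ w ≤ eucNorm v * eucNorm w := by
  simpa [eucNorm_eq_norm_toLp, EuclideanSpace.inner_toLp_toLp, dotProduct_comm] using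
    real_inner_le_norm (WithLp.toLp 2 v) (WithLp.toLp 2 w)

lemma ciInf_mul_dotProduct_self_le {ι : Type*} [Fintype ι] [DecidableEq ι] (w x : ι → ℝ) :
    (⨅ i, w i) * (x ⬝ᵥ x) ≤ x ⬝ᵥ (diagonal w *ᵥ x) := by
  simp only [dotProduct, mulVec_diagonal, Finset.mul_sum]
  refine Finset.sum_le_sum fun i _ => ?_
  calc (⨅ i, w i) * (x i * x i) ≤ w i * (x i * x i) :=
        mul_le_mul_of_nonneg_right (ciInf_le (Set.finite_range w).bddBelow i)
          (mul_self_nonneg _)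
    _ = x i * (w i * x i) := by ring

lemma mul_le_mul_sq_add_sq_div {a b c : ℝ} (hc : 0 < c) :
    a * b ≤ c * a ^ 2 + b ^ 2 / (4 * c) := by
  have h : 0 ≤ (2 * c * a - b) ^ 2 / (4 * c) := by positivity
  have h' : (2 * c * a - b) ^ 2 / (4 * c) = c * a ^ 2 - a * b + b ^ 2 / (4 * c) := by
    field_simp
    ring
  linarith

section deriv

variable {m ι : Type*} [Fintype ι] {t : ℝ}

theorem HasDerivAt.dotProduct {x y : ℝ → ι → ℝ} {x' y' : ι → ℝ}
    (hx : HasDerivAt x x' t) (hy : HasDerivAt y y' t) :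
    HasDerivAt (fun s => x s ⬝ᵥ y s) (x' ⬝ᵥ y t + x t ⬝ᵥ y') t := by
  have h := HasDerivAt.fun_sum (u := Finset.univ) fun i _ =>
    (hasDerivAt_pi.mp hx i).fun_mul (hasDerivAt_pi.mp hy i)
  rw [_root_.dotProduct, _root_.dotProduct, ← Finset.sum_add_distrib]
  exact h

theorem HasDerivAt.mulVec {A : ℝ → Matrix m ι ℝ} {A' : Matrix m ι ℝ}
    {x : ℝ → ι → ℝ} {x' : ι → ℝ}
    (hA : ∀ i j, HasDerivAt (fun s => A s i j) (A' i j) t) (hx : HasDerivAt x x' t) :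
    HasDerivAt (fun s => A s *ᵥ x s) (A' *ᵥ x t + A t *ᵥ x') t :=
  hasDerivAt_pi.mpr fun i => (hasDerivAt_pi.mpr (hA i)).dotProduct hx

theorem HasDerivAt.dotProduct_mulVec_self {A : ℝ → Matrix ι ι ℝ} {A' : Matrix ι ι ℝ}
    {x : ℝ → ι → ℝ} {x' : ι → ℝ}
    (hA : ∀ i j, HasDerivAt (fun s => A s i j) (A' i j) t) (hx : HasDerivAt x x' t)
    (hsymm : (A t).IsSymm) :
    HasDerivAt (fun s => x s ⬝ᵥ (A s *ᵥ x s))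
      (x t ⬝ᵥ (A' *ᵥ x t) + 2 * (x t ⬝ᵥ (A t *ᵥ x'))) t := by
  convert hx.dotProduct (HasDerivAt.mulVec hA hx) using 1
  rw [dotProduct_add, dotProduct_mulVec x', ← mulVec_transpose, hsymm.eq,
    dotProduct_comm (A t *ᵥ x')]
  ring

end deriv

theorem HasDerivAt.log_sq_div_sq_sub_sq {f : ℝ → ℝ} {f' Δ t : ℝ} (hf : HasDerivAt f f' t)
    (h : |f t| < Δ) :
    HasDerivAt (fun s => Real.log (Δ ^ 2 / (Δ ^ 2 - f s ^ 2)))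
      (2 * f t * f' / (Δ ^ 2 - f t ^ 2)) t := by
  have hΔ : 0 < Δ := (abs_nonneg _).trans_lt h
  have hD : 0 < Δ ^ 2 - f t ^ 2 := by
    rw [sub_pos, ← sq_abs]
    exact pow_lt_pow_left₀ h (abs_nonneg _) two_ne_zero
  have hq := ((hasDerivAt_const t (Δ ^ 2)).fun_div ((hasDerivAt_const t (Δ ^ 2)).fun_sub
    (hf.fun_pow 2)) hD.ne').log (div_pos (pow_pos hΔ 2) hD).ne'
  refine hq.congr_deriv ?_
  field_simp
  ring

lemma sum_barrier_deriv_eq {ι : Type*} [Fintype ι] [DecidableEq ι] (k α D e r : ι → ℝ) :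
    ∑ i, k i / 2 * (2 * e i * (-(diagonal α *ᵥ e) + r) i / D i)
      = -(e ⬝ᵥ (diagonal (fun i => k i * α i / D i) *ᵥ e))
        + r ⬝ᵥ (diagonal (fun i => k i / D i) *ᵥ e) := by
  simp only [dotProduct, mulVec_diagonal, Pi.add_apply, Pi.neg_apply, ← Finset.sum_neg_distrib,
    ← Finset.sum_add_distrib]
  refine Finset.sum_congr rfl fun i _ => ?_
  ring

lemma dotProduct_inv_diagonal_mulVec_neg_diagonal_mulVec {ι κ : Type*} [Fintype ι] [Fintype κ]
    [DecidableEq κ] {γ : κ → ℝ} (hγ : ∀ j, γ j ≠ 0) (Y : Matrix ι κ ℝ) (θ : κ → ℝ) (r : ι → ℝ) :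
    θ ⬝ᵥ ((diagonal γ)⁻¹ *ᵥ -(diagonal γ *ᵥ (Yᵀ *ᵥ r))) = -(r ⬝ᵥ (Y *ᵥ θ)) := by
  have hdet : IsUnit (diagonal γ).det := by
    simpa [det_diagonal, Finset.prod_ne_zero_iff] using hγ
  rw [mulVec_neg, mulVec_mulVec, nonsing_inv_mul _ hdet, one_mulVec, dotProduct_neg,
    mulVec_transpose, dotProduct_mulVec, dotProduct_comm]

lemma lyapunov_rate_le {n : ℕ} (κ w r e χ : Fin n → ℝ) {kn ρ1 ρ2 : ℝ} (hkn : 0 < kn)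
    (hχ : eucNorm χ ≤ ρ1 * eucNorm e + ρ2 * eucNorm r) :
    -(r ⬝ᵥ (diagonal κ *ᵥ r)) + r ⬝ᵥ χ - (kn * ρ1 ^ 2 + ρ2) * (r ⬝ᵥ r)
        - e ⬝ᵥ (diagonal w *ᵥ e)
      ≤ -(⨅ i, κ i) * eucNorm r ^ 2 - ((⨅ i, w i) - 1 / (4 * kn)) * eucNorm e ^ 2 := by
  have hκ := ciInf_mul_dotProduct_self_le κ r
  have hw := ciInf_mul_dotProduct_self_le w e
  have hrχ : r ⬝ᵥ χ ≤ ρ1 * eucNorm r * eucNorm e + ρ2 * eucNorm r ^ 2 :=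
    calc r ⬝ᵥ χ ≤ eucNorm r * eucNorm χ := dotProduct_le_eucNorm_mul_eucNorm r χ
      _ ≤ eucNorm r * (ρ1 * eucNorm e + ρ2 * eucNorm r) :=
        mul_le_mul_of_nonneg_left hχ (Real.sqrt_nonneg _)
      _ = ρ1 * eucNorm r * eucNorm e + ρ2 * eucNorm r ^ 2 := by ring
  have hyoung := mul_le_mul_sq_add_sq_div (a := ρ1 * eucNorm r) (b := eucNorm e) hkn
  rw [dotProduct_self_eq_eucNorm_sq] at hκ hw ⊢
  linear_combination hκ + hw + hrχ + hyoung

theorem log_barrier_lyapunov_derivative_general (n p : ℕ)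
    (Δ k κ α : Fin n → ℝ) (kn : ℝ) (γ : Fin p → ℝ)
    (hkn : 0 < kn) (hγ : ∀ j, 0 < γ j)
    (t : ℝ) (e r : ℝ → Fin n → ℝ) (θ : ℝ → Fin p → ℝ)
    (e' r' : Fin n → ℝ) (θ' : Fin p → ℝ)
    (he : HasDerivAt e e' t) (hr : HasDerivAt r r' t) (hθ : HasDerivAt θ θ' t)
    (M : ℝ → Matrix (Fin n) (Fin n) ℝ) (M' : Matrix (Fin n) (Fin n) ℝ)
    (hM : ∀ i j, HasDerivAt (fun s => M s i j) (M' i j) t)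
    (hMsymm : (M t).IsSymm)
    (C : Matrix (Fin n) (Fin n) ℝ) (Yd : Matrix (Fin n) (Fin p) ℝ)
    (χ : Fin n → ℝ) (ρ1 ρ2 : ℝ)
    (hcons : ∀ i, |e t i| < Δ i)
    (hclosed : (M t) *ᵥ r' = -(C *ᵥ r t) - (Matrix.diagonal κ) *ᵥ r t
      - (Matrix.diagonal (fun i => k i / (Δ i ^ 2 - (e t i) ^ 2))) *ᵥ e t
      + χ - (kn * ρ1 ^ 2 + ρ2) • r t + Yd *ᵥ θ t)
    (hskew : r t ⬝ᵥ ((M' - (2 : ℝ) • C) *ᵥ r t) = 0)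
    (hχ : eucNorm χ ≤ ρ1 * eucNorm (e t) + ρ2 * eucNorm (r t))
    (hedot : e' = -(Matrix.diagonal α *ᵥ e t) + r t)
    (hθdot : θ' = -(Matrix.diagonal γ *ᵥ (Ydᵀ *ᵥ r t))) :
    ∃ V' : ℝ,
      HasDerivAt (fun s => (1 / 2) * (r s ⬝ᵥ (M s *ᵥ r s))
        + ∑ i, (k i / 2) * Real.log ((Δ i) ^ 2 / ((Δ i) ^ 2 - (e s i) ^ 2))
        + (1 / 2) * (θ s ⬝ᵥ ((Matrix.diagonal γ)⁻¹ *ᵥ θ s))) V' t ∧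
      V' ≤ -(⨅ i, κ i) * eucNorm (r t) ^ 2
        - ((⨅ i, k i * α i / (Δ i ^ 2 - (e t i) ^ 2)) - 1 / (4 * kn))
            * eucNorm (e t) ^ 2 := by
  have hkinetic := (hr.dotProduct_mulVec_self hM hMsymm).const_mul (1 / 2 : ℝ)
  have hbarrier := HasDerivAt.fun_sum (u := Finset.univ) fun i _ =>
    ((hasDerivAt_pi.mp he i).log_sq_div_sq_sub_sq (hcons i)).const_mul (k i / 2)
  have hadaptive := (hθ.dotProduct_mulVec_self (A := fun _ => (diagonal γ)⁻¹) (A' := 0) (fun _ _ => hasDerivAt_const t _)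
    (isSymm_diagonal γ).inv).const_mul (1 / 2 : ℝ)
  refine ⟨_, (hkinetic.add hbarrier).add hadaptive, ?_⟩
  have hMr : r t ⬝ᵥ (M t *ᵥ r') = -(r t ⬝ᵥ (C *ᵥ r t)) - r t ⬝ᵥ (diagonal κ *ᵥ r t)
      - r t ⬝ᵥ (diagonal (fun i => k i / (Δ i ^ 2 - e t i ^ 2)) *ᵥ e t) + r t ⬝ᵥ χ
      - (kn * ρ1 ^ 2 + ρ2) * (r t ⬝ᵥ r t) + r t ⬝ᵥ (Yd *ᵥ θ t) := by
    simp only [hclosed, dotProduct_add, dotProduct_sub, dotProduct_neg, dotProduct_smul,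
      smul_eq_mul]
  have hCoriolis : r t ⬝ᵥ (M' *ᵥ r t) = 2 * (r t ⬝ᵥ (C *ᵥ r t)) := by
    rwa [sub_mulVec, dotProduct_sub, smul_mulVec, dotProduct_smul, smul_eq_mul, sub_eq_zero]
      at hskew
  rw [hedot, sum_barrier_deriv_eq, hθdot,
    dotProduct_inv_diagonal_mulVec_neg_diagonal_mulVec (fun j => (hγ j).ne'), hMr, hCoriolis,
    zero_mulVec, dotProduct_zero]
  linarith [lyapunov_rate_le κ (fun i => k i * α i / (Δ i ^ 2 - e t i ^ 2)) (r t) (e t) χ hkn hχ]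

open Matrix in
/-- Lyapunov-derivative inequality for the logarithmic-barrier gain design
`K_e = diag{k_i/(Δ_i² − e_i²)}`: under the closed-loop error dynamics, skew-symmetry,
the bound on `χ`, the filtered-error relation and the adaptive update law, the barrier
Lyapunov function `V_l` is differentiable at `t` with
`V_l'(t) ≤ −(minᵢ κ_i)‖r‖² − (minᵢ k_iα_i/(Δ_i² − e_i²) − 1/(4k_n))‖e‖²`. -/
theorem log_barrier_lyapunov_derivative (n p : ℕ) (hn : 0 < n)
    (Δ k κ α : Fin n → ℝ) (kn : ℝ) (γ : Fin p → ℝ)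
    (hΔ : ∀ i, 0 < Δ i) (hk : ∀ i, 0 < k i) (hkn : 0 < kn)
    (hκ : ∀ i, 0 < κ i) (hα : ∀ i, 0 < α i) (hγ : ∀ j, 0 < γ j)
    (t : ℝ) (e r : ℝ → Fin n → ℝ) (θ : ℝ → Fin p → ℝ)
    (e' r' : Fin n → ℝ) (θ' : Fin p → ℝ)
    (he : HasDerivAt e e' t) (hr : HasDerivAt r r' t) (hθ : HasDerivAt θ θ' t)
    (M : ℝ → Matrix (Fin n) (Fin n) ℝ) (M' : Matrix (Fin n) (Fin n) ℝ)
    (hM : ∀ i j, HasDerivAt (fun s => M s i j) (M' i j) t)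
    (hMsymm : (M t).IsSymm)
    (C : Matrix (Fin n) (Fin n) ℝ) (Yd : Matrix (Fin n) (Fin p) ℝ)
    (χ : Fin n → ℝ) (ρ1 ρ2 : ℝ) (hρ1 : 0 ≤ ρ1) (hρ2 : 0 ≤ ρ2)
    (hcons : ∀ i, |e t i| < Δ i)
    (hclosed : (M t) *ᵥ r' = -(C *ᵥ r t) - (Matrix.diagonal κ) *ᵥ r t
      - (Matrix.diagonal (fun i => k i / (Δ i ^ 2 - (e t i) ^ 2))) *ᵥ e t
      + χ - (kn * ρ1 ^ 2 + ρ2) • r t + Yd *ᵥ θ t)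
    (hskew : r t ⬝ᵥ ((M' - (2 : ℝ) • C) *ᵥ r t) = 0)
    (hχ : eucNorm χ ≤ ρ1 * eucNorm (e t) + ρ2 * eucNorm (r t))
    (hedot : e' = -(Matrix.diagonal α *ᵥ e t) + r t)
    (hθdot : θ' = -(Matrix.diagonal γ *ᵥ (Ydᵀ *ᵥ r t))) :
    ∃ V' : ℝ,
      HasDerivAt (fun s => (1 / 2) * (r s ⬝ᵥ (M s *ᵥ r s))
        + ∑ i, (k i / 2) * Real.log ((Δ i) ^ 2 / ((Δ i) ^ 2 - (e s i) ^ 2))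
        + (1 / 2) * (θ s ⬝ᵥ ((Matrix.diagonal γ)⁻¹ *ᵥ θ s))) V' t ∧
      V' ≤ -(⨅ i, κ i) * eucNorm (r t) ^ 2
        - ((⨅ i, k i * α i / (Δ i ^ 2 - (e t i) ^ 2)) - 1 / (4 * kn))
            * eucNorm (e t) ^ 2 :=
  log_barrier_lyapunov_derivative_general n p Δ k κ α kn γ hkn hγ t e r θ e' r' θ' he hr hθ M M' hM
    hMsymm C Yd χ ρ1 ρ2 hcons hclosed hskew hχ hedot hθdot
end
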